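/- arXiv:2104.07752 — 2 statements merged into one kernel-verified Lean document; each statement's English description precedes it below -/
import Mathlib

section
/- For an F-invariant probability measure λ on ℝ^{2p} and any probability π: the three conditions (a) λ = 2^{-p} Σ_{f∈F} π∘f⁻¹, (b) π ≪ λ with density q satisfying Σ_{f∈F} q∘f = 2^p λ-a.e., and (c) π = λ on the σ-field of F-invariant Borel sets, are pairwise equivalent. -/
/-!
The swap maps form an action of the group `(Finset (Fin p), ∆) ≅ (ℤ/2)^p`, and the argument works
for any finite group `G` acting measurably, with `λ` invariant. Write `Σν := ∑ g, ν ∘ (g •)⁻¹`, so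
that (a) reads `Σπ = |G| λ`. If `π = λ.withDensity q`, invariance of `λ` gives
`Σπ = λ.withDensity (∑ g, q (g • ·))`, so (a) and (b) say the same thing about the density.
Evaluating (a) on an invariant set gives (c). Conversely, `Σν B = ∫ ∑ g, 1_B (g • x) dν(x)` for
every `ν`, and the integrand is measurable for the σ-algebra of invariant sets, on which `π` and `λ`
agree by (c); hence `Σπ = Σλ = |G| λ`.
-/

open MeasureTheory Set ENNReal

/-- The swap map `f_S` on `ℝ^p × ℝ^p`. -/
noncomputable def swapMap (p : ℕ) (S : Finset (Fin p)) :
    ((Fin p → ℝ) × (Fin p → ℝ)) → ((Fin p → ℝ) × (Fin p → ℝ)) :=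
  fun z => (fun i => if i ∈ S then z.2 i else z.1 i,
            fun i => if i ∈ S then z.1 i else z.2 i)

namespace MeasurableSpace

variable (G α : Type*) [MeasurableSpace α] [Group G] [MulAction G α]

abbrev smulInvariants : MeasurableSpace α := ⨅ g : G, invariants (g • · : α → α)

variable {G α}

theorem measurableSet_smulInvariants {s : Set α} :
    MeasurableSet[smulInvariants G α] s ↔ MeasurableSet s ∧ ∀ g : G, (g • ·) ⁻¹' s = s := by
  rw [smulInvariants, measurableSet_iInf]
  simp only [measurableSet_invariants, forall_and]
  exact and_congr_left fun _ => ⟨fun h => h 1, fun h _ => h⟩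

theorem smulInvariants_le : smulInvariants G α ≤ ‹MeasurableSpace α› :=
  iInf_le_of_le 1 (invariants_le _)

theorem measurable_smulInvariants {β : Type*} [MeasurableSpace β] {f : α → β}
    (hf : Measurable f) (hf_inv : ∀ (g : G) x, f (g • x) = f x) :
    Measurable[smulInvariants G α] f := fun _ hs =>
  measurableSet_smulInvariants.2 ⟨hf hs, fun g => by ext x; simp [hf_inv]⟩

end MeasurableSpace

theorem Fintype.sum_smul_smul_eq {G α M : Type*} [Group G] [Fintype G] [MulAction G α]
    [AddCommMonoid M] (f : α → M) (h : G) (x : α) :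
    ∑ g : G, f (g • h • x) = ∑ g : G, f (g • x) := by
  simp_rw [smul_smul]
  exact Equiv.sum_comp (Equiv.mulRight h) fun g => f (g • x)

namespace MeasureTheory

open MeasurableSpace

variable {G α : Type*} [Group G] [MeasurableSpace α] [MulAction G α] {μ ν : Measure α}

theorem lintegral_eq_of_forall_smul_invariant_set
    (h : ∀ s, MeasurableSet s → (∀ g : G, (g • ·) ⁻¹' s = s) → ν s = μ s)
    {f : α → ℝ≥0∞} (hf : Measurable f) (hf_inv : ∀ (g : G) x, f (g • x) = f x) :
    ∫⁻ x, f x ∂ν = ∫⁻ x, f x ∂μ := by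
  have hfm := measurable_smulInvariants hf hf_inv
  rw [← lintegral_trim smulInvariants_le hfm, ← lintegral_trim smulInvariants_le hfm]
  refine congrArg (lintegral · f) (@Measure.ext _ (smulInvariants G α) _ _ fun s hs => ?_)
  rw [trim_measurableSet_eq _ hs, trim_measurableSet_eq _ hs]
  exact h s (measurableSet_smulInvariants.1 hs).1 (measurableSet_smulInvariants.1 hs).2

variable [MeasurableConstSMul G α]

theorem map_smul_withDensity [SMulInvariantMeasure G α μ] {q : α → ℝ≥0∞} (hq : Measurable q)
    (g : G) : (μ.withDensity q).map (g • ·) = μ.withDensity fun x => q (g⁻¹ • x) := by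
  have hg := measurable_const_smul (α := α) g
  ext s hs
  rw [Measure.map_apply hg hs, withDensity_apply _ (hg hs), withDensity_apply _ hs]
  calc ∫⁻ x in (g • ·) ⁻¹' s, q x ∂μ = ∫⁻ x in (g • ·) ⁻¹' s, q (g⁻¹ • g • x) ∂μ := by
        simp only [inv_smul_smul]
    _ = ∫⁻ x in s, q (g⁻¹ • x) ∂(μ.map (g • ·)) :=
        (setLIntegral_map hs (hq.comp (measurable_const_smul _)) hg).symm
    _ = ∫⁻ x in s, q (g⁻¹ • x) ∂μ := by rw [MeasureTheory.map_smul]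

variable [Fintype G]

theorem lintegral_sum_map_smul (ν : Measure α) {f : α → ℝ≥0∞} (hf : Measurable f) :
    ∫⁻ x, f x ∂(∑ g : G, ν.map (g • ·)) = ∫⁻ x, ∑ g : G, f (g • x) ∂ν := by
  rw [lintegral_finsetSum_measure, lintegral_finsetSum]
  · exact Finset.sum_congr rfl fun g _ => lintegral_map hf (measurable_const_smul g)
  · exact fun g _ => hf.comp (measurable_const_smul g)

theorem sum_map_smul_of_smulInvariantMeasure [SMulInvariantMeasure G α μ] :
    ∑ g : G, μ.map (g • ·) = (Fintype.card G : ℝ≥0∞) • μ := by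
  simp [MeasureTheory.map_smul, Finset.sum_const, Finset.card_univ, ← Nat.cast_smul_eq_nsmul ℝ≥0∞]

theorem sum_map_smul_withDensity [SMulInvariantMeasure G α μ] {q : α → ℝ≥0∞} (hq : Measurable q) :
    ∑ g : G, (μ.withDensity q).map (g • ·) = μ.withDensity fun x => ∑ g : G, q (g • x) := by
  ext s hs
  rw [Measure.finsetSum_apply, withDensity_apply _ hs, lintegral_finsetSum]
  · simp_rw [map_smul_withDensity hq, withDensity_apply _ hs]
    exact Equiv.sum_comp (Equiv.inv G) fun g => ∫⁻ x in s, q (g • x) ∂μ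
  · exact fun g _ => hq.comp (measurable_const_smul g)

theorem sum_map_smul_eq_iff_forall_smul_invariant_set [SMulInvariantMeasure G α μ] :
    ∑ g : G, ν.map (g • ·) = (Fintype.card G : ℝ≥0∞) • μ ↔
      ∀ s, MeasurableSet s → (∀ g : G, (g • ·) ⁻¹' s = s) → ν s = μ s := by
  have hcard : (Fintype.card G : ℝ≥0∞) ≠ 0 := by simp
  constructor
  · intro h s hs hs_inv
    have := congrArg (· s) h
    simp only [Measure.finsetSum_apply, Measure.map_apply (measurable_const_smul _) hs, hs_inv,
      Finset.sum_const, Finset.card_univ, nsmul_eq_mul, Measure.smul_apply, smul_eq_mul] at this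
    exact (ENNReal.mul_right_inj hcard (natCast_ne_top _)).1 this
  · intro h
    ext s hs
    have h_ind : Measurable (s.indicator (1 : α → ℝ≥0∞)) := measurable_one.indicator hs
    have h_sum (ρ : Measure α) :
        (∑ g : G, ρ.map (g • ·)) s = ∫⁻ x, ∑ g : G, s.indicator 1 (g • x) ∂ρ := by
      rw [← lintegral_sum_map_smul ρ h_ind, lintegral_indicator_one hs]
    rw [← sum_map_smul_of_smulInvariantMeasure, h_sum, h_sum]
    exact lintegral_eq_of_forall_smul_invariant_set h
      (Finset.measurable_sum _ fun g _ => h_ind.comp (measurable_const_smul g))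
      (fun h x => Fintype.sum_smul_smul_eq _ h x)

theorem sum_map_smul_eq_iff_exists_density [SigmaFinite μ] [SigmaFinite ν]
    [SMulInvariantMeasure G α μ] :
    ∑ g : G, ν.map (g • ·) = (Fintype.card G : ℝ≥0∞) • μ ↔
      ∃ q : α → ℝ≥0∞, Measurable q ∧ ν = μ.withDensity q ∧
        ∀ᵐ x ∂μ, ∑ g : G, q (g • x) = Fintype.card G := by
  constructor
  · intro h
    have hle : ν ≤ (Fintype.card G : ℝ≥0∞) • μ := by
      rw [← h, ← Measure.sum_fintype]
      simpa using Measure.le_sum (fun g : G => ν.map (g • ·)) 1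
    have hνμ : ν ≪ μ := Measure.absolutelyContinuous_of_le_smul hle
    have hq := Measure.measurable_rnDeriv ν μ
    refine ⟨ν.rnDeriv μ, hq, (Measure.withDensity_rnDeriv_eq _ _ hνμ).symm, ?_⟩
    have hdens := sum_map_smul_withDensity (G := G) (μ := μ) hq
    rw [Measure.withDensity_rnDeriv_eq _ _ hνμ, h, ← withDensity_const] at hdens
    exact ((withDensity_eq_iff_of_sigmaFinite aemeasurable_const
      (Finset.measurable_sum _ fun g _ => hq.comp (measurable_const_smul g)).aemeasurable).1
      hdens).symm
  · rintro ⟨q, hq, rfl, hsum⟩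
    rw [sum_map_smul_withDensity hq, withDensity_congr_ae hsum, withDensity_const]

theorem absolutelyContinuous_and_exists_withDensity_iff {P : (α → ℝ≥0∞) → Prop} :
    (ν ≪ μ ∧ ∃ q, Measurable q ∧ ν = μ.withDensity q ∧ P q) ↔
      ∃ q, Measurable q ∧ ν = μ.withDensity q ∧ P q :=
  and_iff_right_of_imp fun ⟨q, _, hν, _⟩ => hν ▸ withDensity_absolutelyContinuous μ q

theorem Measure.eq_inv_smul_iff {μ ν : Measure α} {c : ℝ≥0∞} (h0 : c ≠ 0) (htop : c ≠ ∞) :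
    μ = c⁻¹ • ν ↔ ν = c • μ := by
  constructor <;> rintro rfl
  · rw [smul_smul, ENNReal.mul_inv_cancel h0 htop, one_smul]
  · rw [smul_smul, ENNReal.inv_mul_cancel h0 htop, one_smul]

end MeasureTheory

open scoped symmDiff

theorem swapMap_measurable (p : ℕ) (S : Finset (Fin p)) : Measurable (swapMap p S) := by
  unfold swapMap
  refine Measurable.prod ?_ ?_ <;> dsimp only <;>
    refine measurable_pi_lambda _ fun i => ?_ <;> split <;> fun_prop

theorem swapMap_empty (p : ℕ) (z : (Fin p → ℝ) × (Fin p → ℝ)) : swapMap p ∅ z = z := by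
  simp [swapMap]

theorem swapMap_swapMap (p : ℕ) (S T : Finset (Fin p)) (z : (Fin p → ℝ) × (Fin p → ℝ)) :
    swapMap p S (swapMap p T z) = swapMap p (S ∆ T) z := by
  unfold swapMap
  refine Prod.ext ?_ ?_ <;> funext i <;>
    by_cases hS : i ∈ S <;> by_cases hT : i ∈ T <;> simp [Finset.mem_symmDiff, hS, hT]

abbrev SwapGroup (p : ℕ) := Multiplicative (AsBoolRing (Finset (Fin p)))

-- Same instance as on `Finset (Fin p)`, so that sums over `SwapGroup p` are sums over subsets.
instance (p : ℕ) : Fintype (SwapGroup p) := inferInstanceAs (Fintype (Finset (Fin p)))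

noncomputable instance (p : ℕ) : MulAction (SwapGroup p) ((Fin p → ℝ) × (Fin p → ℝ)) where
  smul S := swapMap p (ofBoolRing S.toAdd)
  one_smul := swapMap_empty p
  mul_smul S T z := by
    change swapMap p (ofBoolRing (S.toAdd + T.toAdd)) z = _
    rw [ofBoolRing_add]
    exact (swapMap_swapMap p _ _ z).symm

instance (p : ℕ) : MeasurableConstSMul (SwapGroup p) ((Fin p → ℝ) × (Fin p → ℝ)) :=
  ⟨fun S => swapMap_measurable p (ofBoolRing S.toAdd)⟩

theorem card_swapGroup (p : ℕ) : (Fintype.card (SwapGroup p) : ℝ≥0∞) = 2 ^ p := by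
  change ((Fintype.card (Finset (Fin p)) : ℕ) : ℝ≥0∞) = 2 ^ p
  simp [Fintype.card_finset]

theorem three_equivalences_general (p : ℕ)
    (lam π : Measure ((Fin p → ℝ) × (Fin p → ℝ)))
    [IsProbabilityMeasure lam] [IsProbabilityMeasure π]
    (hinv : ∀ S : Finset (Fin p), lam.map (swapMap p S) = lam) :
    ((lam = ((2 : ℝ≥0∞) ^ p)⁻¹ • ∑ S : Finset (Fin p), π.map (swapMap p S)) ↔
      (π ≪ lam ∧ ∃ q : ((Fin p → ℝ) × (Fin p → ℝ)) → ℝ≥0∞, Measurable q ∧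
        π = lam.withDensity q ∧
        ∀ᵐ z ∂lam, ∑ S : Finset (Fin p), q (swapMap p S z) = (2 : ℝ≥0∞) ^ p)) ∧
    ((π ≪ lam ∧ ∃ q : ((Fin p → ℝ) × (Fin p → ℝ)) → ℝ≥0∞, Measurable q ∧
        π = lam.withDensity q ∧
        ∀ᵐ z ∂lam, ∑ S : Finset (Fin p), q (swapMap p S z) = (2 : ℝ≥0∞) ^ p) ↔
      (∀ A : Set ((Fin p → ℝ) × (Fin p → ℝ)), MeasurableSet A →
        (∀ S : Finset (Fin p), swapMap p S ⁻¹' A = A) → π A = lam A)) := by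
  have : SMulInvariantMeasure (SwapGroup p) _ lam := ⟨fun S s hs =>
    (Measure.map_apply (swapMap_measurable p _) hs).symm.trans (congrArg (· s) (hinv _))⟩
  have hab := sum_map_smul_eq_iff_exists_density (G := SwapGroup p) (μ := lam) (ν := π)
  have hac := sum_map_smul_eq_iff_forall_smul_invariant_set (G := SwapGroup p) (μ := lam) (ν := π)
  rw [card_swapGroup] at hab hac
  rw [Measure.eq_inv_smul_iff (by simp) (by simp), absolutelyContinuous_and_exists_withDensity_iff]
  exact ⟨hab, hab.symm.trans hac⟩

/-- For an `F`-invariant probability `λ` and any probability `π`, the following are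
pairwise equivalent: (a) `λ = 2^{-p} ∑_{f∈F} π∘f⁻¹`; (b) `π ≪ λ` with a density `q`
satisfying `∑_{f∈F} q∘f = 2^p` `λ`-a.e.; (c) `π = λ` on the σ-field of `F`-invariant
Borel sets. -/
theorem three_equivalences (p : ℕ) (hp : 2 ≤ p)
    (lam π : Measure ((Fin p → ℝ) × (Fin p → ℝ)))
    [IsProbabilityMeasure lam] [IsProbabilityMeasure π]
    (hinv : ∀ S : Finset (Fin p), lam.map (swapMap p S) = lam) :
    ((lam = ((2 : ℝ≥0∞) ^ p)⁻¹ • ∑ S : Finset (Fin p), π.map (swapMap p S)) ↔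
      (π ≪ lam ∧ ∃ q : ((Fin p → ℝ) × (Fin p → ℝ)) → ℝ≥0∞, Measurable q ∧
        π = lam.withDensity q ∧
        ∀ᵐ z ∂lam, ∑ S : Finset (Fin p), q (swapMap p S z) = (2 : ℝ≥0∞) ^ p)) ∧
    ((π ≪ lam ∧ ∃ q : ((Fin p → ℝ) × (Fin p → ℝ)) → ℝ≥0∞, Measurable q ∧
        π = lam.withDensity q ∧
        ∀ᵐ z ∂lam, ∑ S : Finset (Fin p), q (swapMap p S z) = (2 : ℝ≥0∞) ^ p) ↔
      (∀ A : Set ((Fin p → ℝ) × (Fin p → ℝ)), MeasurableSet A →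
        (∀ S : Finset (Fin p), swapMap p S ⁻¹' A = A) → π A = lam A)) :=
  three_equivalences_general p lam π hinv
end

section
/- Suppose there is a random element Z such that P(X₁ ∈ A₁,...,X_p ∈ A_p) = E[Π_{i=1}^p P(X_i ∈ A_i | Z)] for all Borel A₁,...,A_p ⊆ ℝ. Define λ₀ on measurable rectangles by λ₀(A₁ × ⋯ × A_{2p}) = E[Π_{i=1}^p P(X_i ∈ A_i | Z) · Π_{i=1}^p P(X_i ∈ A_{p+i} | Z)]. Then λ₀ extends uniquely to a probability measure λ on ℝ^{2p} which is F-invariant and whose first-p-coordinate marginal equals L(X); hence λ ∈ Λ, i.e., λ is a knockoff distribution for X. -/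
open MeasureTheory Set ProbabilityTheory
open scoped ENNReal

namespace MeasureTheory.Measure

variable {ι ι' : Type*} [Finite ι] [Finite ι'] {α : ι → Type*} {β : ι' → Type*}
  [∀ i, MeasurableSpace (α i)] [∀ j, MeasurableSpace (β j)]

lemma ext_of_univ_pi {μ ν : Measure (∀ i, α i)} [IsFiniteMeasure μ]
    (h : ∀ s : ∀ i, Set (α i), (∀ i, MeasurableSet (s i)) → μ (univ.pi s) = ν (univ.pi s)) :
    μ = ν := by
  refine ext_of_generate_finite _ generateFrom_pi.symm isPiSystem_pi ?_ ?_
  · rintro _ ⟨s, hs, rfl⟩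
    exact h s fun i => hs i (mem_univ i)
  · simpa using h (fun _ => univ) fun _ => .univ

lemma ext_of_univ_pi_prod_univ_pi {μ ν : Measure ((∀ i, α i) × ∀ j, β j)} [IsFiniteMeasure μ]
    (h : ∀ (s : ∀ i, Set (α i)) (t : ∀ j, Set (β j)), (∀ i, MeasurableSet (s i)) →
      (∀ j, MeasurableSet (t j)) → μ (univ.pi s ×ˢ univ.pi t) = ν (univ.pi s ×ˢ univ.pi t)) :
    μ = ν := by
  refine ext_of_generate_finite _ (generateFrom_eq_prod generateFrom_pi generateFrom_pi
    (.pi fun _ => isCountablySpanning_measurableSet)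
    (.pi fun _ => isCountablySpanning_measurableSet)).symm (isPiSystem_pi.prod isPiSystem_pi) ?_ ?_
  · rintro _ ⟨_, ⟨s, hs, rfl⟩, _, ⟨t, ht, rfl⟩, rfl⟩
    exact h s t (fun i => hs i (mem_univ i)) fun j => ht j (mem_univ j)
  · simpa using h (fun _ => univ) (fun _ => univ) (fun _ => .univ) fun _ => .univ

end MeasureTheory.Measure

namespace ProbabilityTheory.Kernel

variable {α ι : Type*} [MeasurableSpace α] [Fintype ι] {β : ι → Type*}
  [∀ i, MeasurableSpace (β i)]

noncomputable def pi (κ : ∀ i, Kernel α (β i)) [∀ i, IsFiniteKernel (κ i)] :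
    Kernel α (∀ i, β i) where
  toFun a := Measure.pi fun i => κ i a
  measurable' := by
    refine .measure_of_isPiSystem generateFrom_pi.symm isPiSystem_pi ?_ ?_
    · rintro _ ⟨s, hs, rfl⟩
      simp_rw [Measure.pi_pi]
      exact Finset.measurable_prod _ fun i _ => (κ i).measurable_coe (hs i (mem_univ i))
    · simp_rw [Measure.pi_univ]
      exact Finset.measurable_prod _ fun i _ => (κ i).measurable_coe .univ

variable (κ : ∀ i, Kernel α (β i)) [∀ i, IsFiniteKernel (κ i)]

lemma pi_apply (a : α) : pi κ a = Measure.pi fun i => κ i a := rfl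

instance : IsFiniteKernel (pi κ) :=
  ⟨⟨∏ i, (κ i).bound,
    ENNReal.prod_lt_top fun i _ => (κ i).bound_lt_top, fun a => by
      rw [pi_apply, Measure.pi_univ]
      exact Finset.prod_le_prod' fun i _ => measure_le_bound (κ i) a univ⟩⟩

instance [∀ i, IsMarkovKernel (κ i)] : IsMarkovKernel (pi κ) :=
  ⟨fun a => by rw [pi_apply]; infer_instance⟩

lemma pi_comp_apply_univ_pi (μ : Measure α) {s : ∀ i, Set (β i)}
    (hs : ∀ i, MeasurableSet (s i)) :
    (pi κ ∘ₘ μ) (univ.pi s) = ∫⁻ a, ∏ i, κ i a (s i) ∂μ := by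
  simp_rw [Measure.bind_apply (.univ_pi hs) (pi κ).aemeasurable, pi_apply, Measure.pi_pi]

lemma pi_prod_pi_comp_apply_univ_pi_prod_univ_pi {ι' : Type*} [Fintype ι'] {γ : ι' → Type*}
    [∀ j, MeasurableSpace (γ j)] (η : ∀ j, Kernel α (γ j)) [∀ j, IsFiniteKernel (η j)]
    (μ : Measure α) {s : ∀ i, Set (β i)} {t : ∀ j, Set (γ j)}
    (hs : ∀ i, MeasurableSet (s i)) (ht : ∀ j, MeasurableSet (t j)) :
    ((pi κ ×ₖ pi η) ∘ₘ μ) (univ.pi s ×ˢ univ.pi t) =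
      ∫⁻ a, (∏ i, κ i a (s i)) * ∏ j, η j a (t j) ∂μ := by
  simp_rw [Measure.bind_apply ((MeasurableSet.univ_pi hs).prod (.univ_pi ht))
    (pi κ ×ₖ pi η).aemeasurable, prod_apply_prod, pi_apply, Measure.pi_pi]

end ProbabilityTheory.Kernel

lemma MeasureTheory.Measure.map_fst_prod_comp {α β γ : Type*} [MeasurableSpace α]
    [MeasurableSpace β] [MeasurableSpace γ] (μ : Measure α) (κ : Kernel α β) [IsSFiniteKernel κ]
    (η : Kernel α γ) [IsMarkovKernel η] : ((κ ×ₖ η) ∘ₘ μ).map Prod.fst = κ ∘ₘ μ := by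
  rw [Measure.map_comp _ _ measurable_fst, ← Kernel.fst_eq, Kernel.fst_prod]

section swapMap

variable {p : ℕ}

lemma measurable_swapMap (S : Finset (Fin p)) : Measurable (swapMap p S) := by
  refine .prod (measurable_pi_lambda _ fun i => ?_) (measurable_pi_lambda _ fun i => ?_) <;>
    simp only [swapMap] <;> split_ifs <;> fun_prop

lemma swapMap_preimage_univ_pi_prod_univ_pi (S : Finset (Fin p)) (A B : Fin p → Set ℝ) :
    swapMap p S ⁻¹' (univ.pi A ×ˢ univ.pi B) =
      univ.pi (S.piecewise B A) ×ˢ univ.pi (S.piecewise A B) := by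
  ext z
  simp only [swapMap, mem_preimage, mem_prod, mem_univ_pi, ← forall_and]
  refine forall_congr' fun i => ?_
  by_cases hi : i ∈ S <;> simp [hi, and_comm]

lemma map_swapMap_pi_prod_pi (ν : Fin p → Measure ℝ) [∀ i, IsFiniteMeasure (ν i)]
    (S : Finset (Fin p)) :
    ((Measure.pi ν).prod (Measure.pi ν)).map (swapMap p S) =
      (Measure.pi ν).prod (Measure.pi ν) := by
  refine Measure.ext_of_univ_pi_prod_univ_pi fun A B hA hB => ?_
  rw [Measure.map_apply (measurable_swapMap S) ((MeasurableSet.univ_pi hA).prod (.univ_pi hB)),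
    swapMap_preimage_univ_pi_prod_univ_pi]
  simp only [Measure.prod_prod, Measure.pi_pi, ← Finset.prod_mul_distrib]
  refine Finset.prod_congr rfl fun i _ => ?_
  by_cases hi : i ∈ S <;> simp [hi, mul_comm]

lemma map_swapMap_pi_prod_pi_comp {α : Type*} [MeasurableSpace α] (κ : Fin p → Kernel α ℝ)
    [∀ i, IsFiniteKernel (κ i)] (μ : Measure α) (S : Finset (Fin p)) :
    ((Kernel.pi κ ×ₖ Kernel.pi κ) ∘ₘ μ).map (swapMap p S) = (Kernel.pi κ ×ₖ Kernel.pi κ) ∘ₘ μ := by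
  rw [Measure.map_comp _ _ (measurable_swapMap S)]
  congr 1
  ext a : 1
  rw [Kernel.map_apply _ (measurable_swapMap S), Kernel.prod_apply, Kernel.pi_apply,
    map_swapMap_pi_prod_pi]

end swapMap

theorem conditional_independence_knockoff_general
    {Ω 𝒵 : Type*} [MeasurableSpace Ω] [MeasurableSpace 𝒵]
    (P : Measure Ω) [IsProbabilityMeasure P] (p : ℕ)
    (X : Ω → (Fin p → ℝ))
    (Z : Ω → 𝒵) (hZ : Measurable Z)
    (κ : Fin p → Kernel 𝒵 ℝ) [∀ i, IsMarkovKernel (κ i)]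
    (hci : ∀ A : Fin p → Set ℝ, (∀ i, MeasurableSet (A i)) →
      P.map X {x | ∀ i, x i ∈ A i} = ∫⁻ z, ∏ i, κ i z (A i) ∂(P.map Z)) :
    ∃ lam : Measure ((Fin p → ℝ) × (Fin p → ℝ)),
      (IsProbabilityMeasure lam ∧
        (∀ A B : Fin p → Set ℝ, (∀ i, MeasurableSet (A i)) →
          (∀ i, MeasurableSet (B i)) →
          lam {z | (∀ i, z.1 i ∈ A i) ∧ (∀ i, z.2 i ∈ B i)} =
            ∫⁻ z, (∏ i, κ i z (A i)) * ∏ i, κ i z (B i) ∂(P.map Z)) ∧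
        (∀ S : Finset (Fin p), lam.map (swapMap p S) = lam) ∧
        lam.map Prod.fst = P.map X) ∧
      ∀ lam' : Measure ((Fin p → ℝ) × (Fin p → ℝ)), IsProbabilityMeasure lam' →
        (∀ A B : Fin p → Set ℝ, (∀ i, MeasurableSet (A i)) →
          (∀ i, MeasurableSet (B i)) →
          lam' {z | (∀ i, z.1 i ∈ A i) ∧ (∀ i, z.2 i ∈ B i)} =
            ∫⁻ z, (∏ i, κ i z (A i)) * ∏ i, κ i z (B i) ∂(P.map Z)) →
        lam' = lam := by
  have : IsProbabilityMeasure (P.map Z) := Measure.isProbabilityMeasure_map hZ.aemeasurable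
  have hbox (A B : Fin p → Set ℝ) : {z : (Fin p → ℝ) × (Fin p → ℝ) |
      (∀ i, z.1 i ∈ A i) ∧ ∀ i, z.2 i ∈ B i} = univ.pi A ×ˢ univ.pi B := by
    ext; simp
  have hlam (A B : Fin p → Set ℝ) (hA : ∀ i, MeasurableSet (A i))
      (hB : ∀ i, MeasurableSet (B i)) :
      ((Kernel.pi κ ×ₖ Kernel.pi κ) ∘ₘ P.map Z) {z | (∀ i, z.1 i ∈ A i) ∧ ∀ i, z.2 i ∈ B i} =
        ∫⁻ z, (∏ i, κ i z (A i)) * ∏ i, κ i z (B i) ∂(P.map Z) := by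
    rw [hbox, Kernel.pi_prod_pi_comp_apply_univ_pi_prod_univ_pi _ _ _ hA hB]
  refine ⟨_, ⟨inferInstance, hlam, map_swapMap_pi_prod_pi_comp κ _, ?_⟩, ?_⟩
  · rw [Measure.map_fst_prod_comp]
    refine (Measure.ext_of_univ_pi fun A hA => ?_).symm
    rw [Kernel.pi_comp_apply_univ_pi _ _ hA, ← hci A hA]
    congr 1
    ext; simp
  · intro lam' _ hlam'
    refine Measure.ext_of_univ_pi_prod_univ_pi fun A B hA hB => ?_
    rw [← hbox, hlam' A B hA hB, hlam A B hA hB]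

/-- Conditional independence construction: if `P(X₁∈A₁,…,X_p∈A_p) = E[∏ P(X_i∈A_i|Z)]`,
then `λ₀(A₁×⋯×A_{2p}) = E[∏ P(X_i∈A_i|Z) ∏ P(X_i∈A_{p+i}|Z)]` extends uniquely to a
probability measure `λ` on `ℝ^{2p}` which is `F`-invariant with first-`p` marginal
`L(X)`; hence `λ ∈ Λ`. -/
theorem conditional_independence_knockoff
    {Ω 𝒵 : Type*} [MeasurableSpace Ω] [MeasurableSpace 𝒵]
    (P : Measure Ω) [IsProbabilityMeasure P] (p : ℕ) (hp : 2 ≤ p)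
    (X : Ω → (Fin p → ℝ)) (hX : Measurable X)
    (Z : Ω → 𝒵) (hZ : Measurable Z)
    (κ : Fin p → Kernel 𝒵 ℝ) [∀ i, IsMarkovKernel (κ i)]
    (hci : ∀ A : Fin p → Set ℝ, (∀ i, MeasurableSet (A i)) →
      P.map X {x | ∀ i, x i ∈ A i} = ∫⁻ z, ∏ i, κ i z (A i) ∂(P.map Z)) :
    ∃ lam : Measure ((Fin p → ℝ) × (Fin p → ℝ)),
      (IsProbabilityMeasure lam ∧
        (∀ A B : Fin p → Set ℝ, (∀ i, MeasurableSet (A i)) →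
          (∀ i, MeasurableSet (B i)) →
          lam {z | (∀ i, z.1 i ∈ A i) ∧ (∀ i, z.2 i ∈ B i)} =
            ∫⁻ z, (∏ i, κ i z (A i)) * ∏ i, κ i z (B i) ∂(P.map Z)) ∧
        (∀ S : Finset (Fin p), lam.map (swapMap p S) = lam) ∧
        lam.map Prod.fst = P.map X) ∧
      ∀ lam' : Measure ((Fin p → ℝ) × (Fin p → ℝ)), IsProbabilityMeasure lam' →
        (∀ A B : Fin p → Set ℝ, (∀ i, MeasurableSet (A i)) →
          (∀ i, MeasurableSet (B i)) →
          lam' {z | (∀ i, z.1 i ∈ A i) ∧ (∀ i, z.2 i ∈ B i)} =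
            ∫⁻ z, (∏ i, κ i z (A i)) * ∏ i, κ i z (B i) ∂(P.map Z)) →
        lam' = lam :=
  conditional_independence_knockoff_general P p X Z hZ κ hci
end
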